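/- arXiv:2112.12401 — 6 statements merged into one kernel-verified Lean document; each statement's English description precedes it below -/
import Mathlib

section
/- The invariant algebra ℂ[x,y,X,Y]^W is generated as a ℂ-algebra by the d+4 elements q, Q, eu₀, a_0, a_1, …, a_d. -/
open MvPolynomial

/-- The algebra endomorphism `x ↦ η·y, y ↦ ζ·x, X ↦ ζ·Y, Y ↦ η·X` of `ℂ[x,y,X,Y]`,
with variables `x = X 0`, `y = X 1`, `X = X 2`, `Y = X 3`. -/
noncomputable def sig (ζ η : ℂ) : MvPolynomial (Fin 4) ℂ →ₐ[ℂ] MvPolynomial (Fin 4) ℂ :=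
  MvPolynomial.aeval ![C η * X 1, C ζ * X 0, C ζ * X 3, C η * X 2]

lemma sig_comp (ζ η : ℂ) (h : ζ * η = 1) : (sig ζ η).comp (sig ζ η) = AlgHom.id ℂ _ := by
  apply MvPolynomial.algHom_ext
  intro j
  fin_cases j <;> simp [sig, ← mul_assoc, ← C_mul, h, mul_comm η ζ]

/-- The automorphism `σ_i` (given by `ζ' = ζ^i`, `η = ζ^{-i}`). -/
noncomputable def sigEquiv (ζ η : ℂ) (h : ζ * η = 1) :
    MvPolynomial (Fin 4) ℂ ≃ₐ[ℂ] MvPolynomial (Fin 4) ℂ :=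
  AlgEquiv.ofAlgHom (sig ζ η) (sig ζ η) (sig_comp ζ η h) (sig_comp ζ η h)

/-- The dihedral group `W` of order `2d`, generated by `σ₀` and `σ₁`, as a group of
algebra automorphisms of `ℂ[x,y,X,Y]`. -/
noncomputable def Wgroup (ζ : ℂ) (hζ : ζ ≠ 0) :
    Subgroup (MvPolynomial (Fin 4) ℂ ≃ₐ[ℂ] MvPolynomial (Fin 4) ℂ) :=
  Subgroup.closure {sigEquiv 1 1 (by ring), sigEquiv ζ ζ⁻¹ (mul_inv_cancel₀ hζ)}

/-- The invariant algebra `ℂ[x,y,X,Y]^W`. -/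
noncomputable def fixedSubalgebra
    (G : Subgroup (MvPolynomial (Fin 4) ℂ ≃ₐ[ℂ] MvPolynomial (Fin 4) ℂ)) :
    Subalgebra ℂ (MvPolynomial (Fin 4) ℂ) where
  carrier := {f | ∀ g ∈ G, g f = f}
  mul_mem' := fun hf hg g hgG => by rw [map_mul, hf g hgG, hg g hgG]
  add_mem' := fun hf hg g hgG => by rw [map_add, hf g hgG, hg g hgG]
  algebraMap_mem' := fun r g _ => g.commutes r

/-- `q = x·y`. -/
noncomputable def qP : MvPolynomial (Fin 4) ℂ := X 0 * X 1
/-- `Q = X·Y`. -/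
noncomputable def QP : MvPolynomial (Fin 4) ℂ := X 2 * X 3
/-- `eu₀ = x·X + y·Y`. -/
noncomputable def euP : MvPolynomial (Fin 4) ℂ := X 0 * X 2 + X 1 * X 3
/-- `a_j = x^{d−j}·Y^j + y^{d−j}·X^j`. -/
noncomputable def aP (d j : ℕ) : MvPolynomial (Fin 4) ℂ :=
  X 0 ^ (d - j) * X 3 ^ j + X 1 ^ (d - j) * X 2 ^ j

/-!
`σ₀` maps the monomial `x^a y^b X^c Y^e` to `x^b y^a X^e Y^c`, and `σ₁ σ₀` multiplies it by
`ζ^((a + e) - (b + c))`. Hence the invariants are spanned by the `σ₀`-orbit sums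
`s(a,b,c,e) = x^a y^b X^c Y^e + x^b y^a X^e Y^c` (`swapSum a b c e`) with `a + e ≡ b + c (mod d)`.
Orbit sums multiply as `s(u) s(v) = s(u + v) + s(u + σ₀ v)`, and this drives an induction on the
degree: divide by `q` or `Q` when possible, and otherwise split off `eu₀ = s(1,0,1,0)`,
`a_0 = s(d,0,0,0)` or `a_d = s(0,0,0,d)`, the correction term `s(u + σ₀ v)` being either divisible
by `q` or `Q` or of the form `s(a,0,c,0)` handled by the `eu₀` step.
-/

lemma IsPrimitiveRoot.pow_eq_pow_iff_natCast_eq {M : Type*} [CommMonoid M] {ζ : M} {d : ℕ}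
    (hζ : IsPrimitiveRoot ζ d) (hd : d ≠ 0) {m n : ℕ} : ζ ^ m = ζ ^ n ↔ (m : ZMod d) = n := by
  rw [(hζ.isOfFinOrder hd).pow_eq_pow_iff_modEq, ← hζ.eq_orderOf, ZMod.natCast_eq_natCast_iff]

lemma Subalgebra.mem_of_two_mul_mem {K A : Type*} [Field K] [NeZero (2 : K)] [Semiring A]
    [Algebra K A] {S : Subalgebra K A} {p : A} (h : 2 * p ∈ S) : p ∈ S := by
  convert S.smul_mem h (2⁻¹ : K) using 1
  rw [Algebra.smul_def, ← mul_assoc, ← map_ofNat (algebraMap K A) 2, ← map_mul,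
    inv_mul_cancel₀ two_ne_zero, map_one, one_mul]

namespace DihedralInvariants

noncomputable def swapSum (a b c e : ℕ) : MvPolynomial (Fin 4) ℂ :=
  X 0 ^ a * X 1 ^ b * X 2 ^ c * X 3 ^ e + X 0 ^ b * X 1 ^ a * X 2 ^ e * X 3 ^ c

lemma swapSum_comm (a b c e : ℕ) : swapSum a b c e = swapSum b a e c := by
  unfold swapSum; ring

lemma swapSum_zero : swapSum 0 0 0 0 = 2 := by
  norm_num [swapSum, one_add_one_eq_two]

lemma swapSum_mul_swapSum (a b c e a' b' c' e' : ℕ) :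
    swapSum a b c e * swapSum a' b' c' e' =
      swapSum (a + a') (b + b') (c + c') (e + e') +
        swapSum (a + b') (b + a') (c + e') (e + c') := by
  simp only [swapSum, pow_add]; ring

lemma qP_mul_swapSum (a b c e : ℕ) : qP * swapSum a b c e = swapSum (a + 1) (b + 1) c e := by
  simp only [qP, swapSum, pow_succ]; ring

lemma QP_mul_swapSum (a b c e : ℕ) : QP * swapSum a b c e = swapSum a b (c + 1) (e + 1) := by
  simp only [QP, swapSum, pow_succ]; ring

lemma euP_eq_swapSum : euP = swapSum 1 0 1 0 := by
  simp only [euP, swapSum]; ring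

lemma aP_eq_swapSum (d j : ℕ) : aP d j = swapSum (d - j) 0 0 j := by
  simp only [aP, swapSum]; ring

noncomputable def basicInvariants (d : ℕ) : Subalgebra ℂ (MvPolynomial (Fin 4) ℂ) :=
  Algebra.adjoin ℂ ({qP, QP, euP} ∪ Set.range (fun j : Fin (d + 1) => aP d j))

section Generation

variable {d : ℕ}

lemma qP_mem : qP ∈ basicInvariants d := Algebra.subset_adjoin (by simp)

lemma QP_mem : QP ∈ basicInvariants d := Algebra.subset_adjoin (by simp)

lemma euP_mem : euP ∈ basicInvariants d := Algebra.subset_adjoin (by simp)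

lemma aP_mem {j : ℕ} (hj : j ≤ d) : aP d j ∈ basicInvariants d :=
  Algebra.subset_adjoin (Or.inr ⟨⟨j, by omega⟩, rfl⟩)

lemma swapSum_succ_succ_left_mem {a b c e : ℕ} (h : swapSum a b c e ∈ basicInvariants d) :
    swapSum (a + 1) (b + 1) c e ∈ basicInvariants d :=
  qP_mul_swapSum a b c e ▸ mul_mem qP_mem h

lemma swapSum_succ_succ_right_mem {a b c e : ℕ} (h : swapSum a b c e ∈ basicInvariants d) :
    swapSum a b (c + 1) (e + 1) ∈ basicInvariants d :=
  QP_mul_swapSum a b c e ▸ mul_mem QP_mem h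

def SwapSumsMemBelow (d n : ℕ) : Prop :=
  ∀ a b c e : ℕ, a + b + c + e < n → (a : ZMod d) + e = b + c →
    swapSum a b c e ∈ basicInvariants d

lemma swapSum_succ_zero_succ_zero_mem {n a c : ℕ} (ih : SwapSumsMemBelow d n)
    (hn : a + c + 2 ≤ n) (h : (a : ZMod d) = c) :
    swapSum (a + 1) 0 (c + 1) 0 ∈ basicInvariants d := by
  have hrec : swapSum (a + 1) 0 (c + 1) 0 = euP * swapSum a 0 c 0 - swapSum a 1 c 1 := by
    rw [euP_eq_swapSum, mul_comm, swapSum_mul_swapSum]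
    simp
  rw [hrec]
  refine sub_mem (mul_mem euP_mem (ih _ _ _ _ (by omega) (by simpa using h))) ?_
  rcases a with _ | a
  · rcases c with _ | c
    · rw [swapSum_comm, ← euP_eq_swapSum]
      exact euP_mem
    · refine swapSum_succ_succ_right_mem (ih _ _ _ _ (by omega) ?_)
      push_cast at h ⊢
      linear_combination h
  · refine swapSum_succ_succ_left_mem (ih _ _ _ _ (by omega) ?_)
    push_cast at h ⊢
    linear_combination h

lemma swapSum_add_zero_zero_mem {n a e : ℕ} (ih : SwapSumsMemBelow d n) (hn : a + d + e = n)
    (hd : 0 < d) (hae : 0 < a + e) (h : (a : ZMod d) + e = 0) :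
    swapSum (a + d) 0 0 e ∈ basicInvariants d := by
  have hdz : (d : ZMod d) = 0 := ZMod.natCast_self d
  have hrec : swapSum (a + d) 0 0 e = swapSum a 0 0 e * aP d 0 - swapSum a d 0 e := by
    rw [aP_eq_swapSum, swapSum_mul_swapSum]
    simp
  rw [hrec]
  refine sub_mem (mul_mem (ih _ _ _ _ (by omega) (by simpa using h)) (aP_mem (Nat.zero_le d))) ?_
  rcases a with _ | a
  · obtain ⟨e, rfl⟩ : ∃ e', e = e' + 1 := ⟨e - 1, by omega⟩
    rw [swapSum_comm]
    convert swapSum_succ_zero_succ_zero_mem (a := d - 1) (c := e) ih (by omega) ?_ using 2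
    · omega
    · push_cast [Nat.cast_sub hd, hdz] at h ⊢
      linear_combination -h
  · convert swapSum_succ_succ_left_mem (ih a (d - 1) 0 e (by omega) ?_) using 2
    · omega
    · push_cast [Nat.cast_sub hd, hdz] at h ⊢
      linear_combination h

lemma swapSum_zero_zero_add_mem {n a e : ℕ} (ih : SwapSumsMemBelow d n) (hn : a + e + d = n)
    (hd : 0 < d) (hae : 0 < a + e) (h : (a : ZMod d) + e = 0) :
    swapSum a 0 0 (e + d) ∈ basicInvariants d := by
  have hdz : (d : ZMod d) = 0 := ZMod.natCast_self d
  have hrec : swapSum a 0 0 (e + d) = swapSum a 0 0 e * aP d d - swapSum a 0 d e := by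
    rw [aP_eq_swapSum, swapSum_mul_swapSum]
    simp
  rw [hrec]
  refine sub_mem (mul_mem (ih _ _ _ _ (by omega) (by simpa using h)) (aP_mem le_rfl)) ?_
  rcases e with _ | e
  · obtain ⟨a, rfl⟩ : ∃ a', a = a' + 1 := ⟨a - 1, by omega⟩
    convert swapSum_succ_zero_succ_zero_mem (a := a) (c := d - 1) ih (by omega) ?_ using 2
    · omega
    · push_cast [Nat.cast_sub hd, hdz] at h ⊢
      linear_combination h
  · convert swapSum_succ_succ_right_mem (ih a 0 (d - 1) e (by omega) ?_) using 2
    · omega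
    · push_cast [Nat.cast_sub hd, hdz] at h ⊢
      linear_combination h

lemma swapSum_zero_zero_mem {n a e : ℕ} (ih : SwapSumsMemBelow d n) (hn : a + e = n)
    (h : (a : ZMod d) + e = 0) : swapSum a 0 0 e ∈ basicInvariants d := by
  have hdvd : d ∣ a + e := by
    rw [← ZMod.natCast_eq_zero_iff]
    push_cast
    exact h
  rcases Nat.eq_zero_or_pos (a + e) with hzero | hpos
  · obtain ⟨rfl, rfl⟩ : a = 0 ∧ e = 0 := by omega
    rw [swapSum_zero]
    exact ofNat_mem _ 2
  have hd : 0 < d := Nat.pos_of_dvd_of_pos hdvd hpos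
  have hdz : (d : ZMod d) = 0 := ZMod.natCast_self d
  rcases (Nat.le_of_dvd hpos hdvd).eq_or_lt with hdeg | hdeg
  · rw [show a = d - e by omega, ← aP_eq_swapSum]
    exact aP_mem (by omega)
  by_cases ha : d ≤ a
  · obtain ⟨a, rfl⟩ : ∃ a', a = a' + d := ⟨a - d, by omega⟩
    exact swapSum_add_zero_zero_mem ih (by omega) hd (by omega) (by simpa [hdz] using h)
  by_cases he : d ≤ e
  · obtain ⟨e, rfl⟩ : ∃ e', e = e' + d := ⟨e - d, by omega⟩
    exact swapSum_zero_zero_add_mem ih (by omega) hd (by omega) (by simpa [hdz] using h)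
  -- `a + e` would be a multiple of `d` strictly between `d` and `2 * d`
  have hdvd' : d ∣ a + e - d := Nat.dvd_sub hdvd dvd_rfl
  have := Nat.eq_zero_of_dvd_of_lt hdvd' (by omega)
  omega

lemma swapSum_zero_mem_of_below {n a c e : ℕ} (ih : SwapSumsMemBelow d n) (hn : a + c + e = n)
    (hce : c = 0 ∨ e = 0) (h : (a : ZMod d) + e = c) : swapSum a 0 c e ∈ basicInvariants d := by
  rcases hce with rfl | rfl
  · exact swapSum_zero_zero_mem ih (by omega) (by simpa using h)
  rcases a with _ | a
  · rw [swapSum_comm]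
    exact swapSum_zero_zero_mem ih (by omega) (by simpa using h.symm)
  rcases c with _ | c
  · exact swapSum_zero_zero_mem ih (by omega) (by simpa using h)
  · exact swapSum_succ_zero_succ_zero_mem ih (by omega) (by simpa using h)

lemma swapSum_mem_of_below {n a b c e : ℕ} (ih : SwapSumsMemBelow d n)
    (hn : a + b + c + e = n) (h : (a : ZMod d) + e = b + c) :
    swapSum a b c e ∈ basicInvariants d := by
  by_cases hab : a ≠ 0 ∧ b ≠ 0
  · obtain ⟨a, rfl⟩ : ∃ a', a = a' + 1 := ⟨a - 1, by omega⟩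
    obtain ⟨b, rfl⟩ : ∃ b', b = b' + 1 := ⟨b - 1, by omega⟩
    refine swapSum_succ_succ_left_mem (ih _ _ _ _ (by omega) ?_)
    push_cast at h ⊢
    linear_combination h
  by_cases hce : c ≠ 0 ∧ e ≠ 0
  · obtain ⟨c, rfl⟩ : ∃ c', c = c' + 1 := ⟨c - 1, by omega⟩
    obtain ⟨e, rfl⟩ : ∃ e', e = e' + 1 := ⟨e - 1, by omega⟩
    refine swapSum_succ_succ_right_mem (ih _ _ _ _ (by omega) ?_)
    push_cast at h ⊢
    linear_combination h
  have hce : c = 0 ∨ e = 0 := by omega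
  rcases (show a = 0 ∨ b = 0 by omega) with rfl | rfl
  · rw [swapSum_comm]
    exact swapSum_zero_mem_of_below ih (by omega) hce.symm (by simpa [add_comm] using h.symm)
  · exact swapSum_zero_mem_of_below ih (by omega) hce (by simpa using h)

theorem swapSum_mem_basicInvariants {a b c e : ℕ} (h : (a : ZMod d) + e = b + c) :
    swapSum a b c e ∈ basicInvariants d := by
  suffices ∀ n, SwapSumsMemBelow d n from this _ _ _ _ _ (Nat.lt_succ_self _) h
  intro n
  induction n with
  | zero => intro _ _ _ _ hlt; omega
  | succ n ih =>
    intro a b c e hlt h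
    rcases Nat.lt_succ_iff_lt_or_eq.mp hlt with hlt | hn
    · exact ih a b c e hlt h
    · exact swapSum_mem_of_below ih hn h

end Generation

lemma sig_C_mul (ζ η c : ℂ) (p : MvPolynomial (Fin 4) ℂ) :
    sig ζ η (C c * p) = C c * sig ζ η p := by
  rw [map_mul, sig, aeval_C, algebraMap_eq]

lemma sig_X_pow_mul (ζ η : ℂ) (a b c e : ℕ) :
    sig ζ η (X 0 ^ a * X 1 ^ b * X 2 ^ c * X 3 ^ e) =
      C (η ^ (a + e) * ζ ^ (b + c)) * (X 0 ^ b * X 1 ^ a * X 2 ^ e * X 3 ^ c) := by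
  simp only [sig, map_mul, map_pow, aeval_X, Matrix.cons_val_zero, Matrix.cons_val_one,
    Matrix.cons_val, mul_pow, pow_add]
  ring

lemma monomial_eq_C_mul_X_pow (u : Fin 4 →₀ ℕ) (c : ℂ) :
    monomial u c = C c * (X 0 ^ u 0 * X 1 ^ u 1 * X 2 ^ u 2 * X 3 ^ u 3) := by
  rw [monomial_eq, Finsupp.prod_pow, Fin.prod_univ_four]

lemma sig_swapSum {ζ η : ℂ} {a b c e : ℕ} (h₁ : η ^ (a + e) * ζ ^ (b + c) = 1)
    (h₂ : η ^ (b + c) * ζ ^ (a + e) = 1) : sig ζ η (swapSum a b c e) = swapSum a b c e := by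
  rw [swapSum, map_add, sig_X_pow_mul, sig_X_pow_mul, h₁, h₂, C_1, one_mul, one_mul, add_comm]

lemma add_sig_one_one_eq_sum (f : MvPolynomial (Fin 4) ℂ) :
    f + sig 1 1 f = ∑ u ∈ f.support, C (coeff u f) * swapSum (u 0) (u 1) (u 2) (u 3) := by
  conv_lhs => rw [f.as_sum]
  rw [map_sum, ← Finset.sum_add_distrib]
  refine Finset.sum_congr rfl fun u _ => ?_
  simp only [monomial_eq_C_mul_X_pow, sig_C_mul, sig_X_pow_mul, swapSum, one_pow, mul_one, C_1,
    one_mul]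
  ring

lemma coeff_sig_sig_one_one (ζ η : ℂ) (f : MvPolynomial (Fin 4) ℂ) (u : Fin 4 →₀ ℕ) :
    coeff u (sig ζ η (sig 1 1 f)) = η ^ (u 1 + u 2) * ζ ^ (u 0 + u 3) * coeff u f := by
  induction f using MvPolynomial.induction_on' with
  | monomial v c =>
    have hmon : sig ζ η (sig 1 1 (monomial v c)) =
        monomial v (η ^ (v 1 + v 2) * ζ ^ (v 0 + v 3) * c) := by
      simp only [monomial_eq_C_mul_X_pow, sig_C_mul, sig_X_pow_mul, one_pow, mul_one, C_1, one_mul,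
        C_mul]
      ring
    rw [hmon, coeff_monomial, coeff_monomial]
    split_ifs with h
    · rw [h]
    · rw [mul_zero]
  | add p q hp hq => rw [map_add, map_add, coeff_add, coeff_add, hp, hq, mul_add]

lemma mem_fixedSubalgebra_closure_iff
    {S : Set (MvPolynomial (Fin 4) ℂ ≃ₐ[ℂ] MvPolynomial (Fin 4) ℂ)} {f : MvPolynomial (Fin 4) ℂ} :
    f ∈ fixedSubalgebra (Subgroup.closure S) ↔ ∀ s ∈ S, s f = f := by
  refine ⟨fun hf s hs => hf s (Subgroup.subset_closure hs), fun hf g hg => ?_⟩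
  have hle : Subgroup.closure S ≤ MulAction.stabilizer _ f :=
    (Subgroup.closure_le _).mpr fun s hs => MulAction.mem_stabilizer_iff.mpr (hf s hs)
  exact MulAction.mem_stabilizer_iff.mp (hle hg)

section FixedSubalgebra

variable {ζ : ℂ} {d : ℕ}

lemma mem_fixedSubalgebra_Wgroup_iff (hζ : ζ ≠ 0) {f : MvPolynomial (Fin 4) ℂ} :
    f ∈ fixedSubalgebra (Wgroup ζ hζ) ↔ sig 1 1 f = f ∧ sig ζ ζ⁻¹ f = f := by
  simp [Wgroup, mem_fixedSubalgebra_closure_iff, sigEquiv]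

lemma swapSum_mem_fixedSubalgebra (hζd : ζ ^ d = 1) (hζ : ζ ≠ 0) {a b c e : ℕ}
    (h : (a : ZMod d) + e = b + c) : swapSum a b c e ∈ fixedSubalgebra (Wgroup ζ hζ) := by
  have hpow : ζ ^ (a + e) = ζ ^ (b + c) :=
    pow_eq_pow_of_modEq ((ZMod.natCast_eq_natCast_iff _ _ _).mp (by push_cast; exact h)) hζd
  have h₁ : ζ⁻¹ ^ (a + e) * ζ ^ (b + c) = 1 := by
    rw [inv_pow, inv_mul_eq_one₀ (pow_ne_zero _ hζ), hpow]
  have h₂ : ζ⁻¹ ^ (b + c) * ζ ^ (a + e) = 1 := by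
    rw [inv_pow, inv_mul_eq_one₀ (pow_ne_zero _ hζ), hpow]
  rw [mem_fixedSubalgebra_Wgroup_iff]
  exact ⟨sig_swapSum (by simp) (by simp), sig_swapSum h₁ h₂⟩

lemma basicInvariants_le_fixedSubalgebra (hζd : ζ ^ d = 1) (hζ : ζ ≠ 0) :
    basicInvariants d ≤ fixedSubalgebra (Wgroup ζ hζ) := by
  refine Algebra.adjoin_le ?_
  rintro p ((rfl | rfl | rfl) | ⟨j, rfl⟩)
  · refine Subalgebra.mem_of_two_mul_mem ?_
    rw [show 2 * qP = swapSum 1 1 0 0 by simp only [qP, swapSum]; ring]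
    exact swapSum_mem_fixedSubalgebra hζd hζ (by simp)
  · refine Subalgebra.mem_of_two_mul_mem ?_
    rw [show 2 * QP = swapSum 0 0 1 1 by simp only [QP, swapSum]; ring]
    exact swapSum_mem_fixedSubalgebra hζd hζ (by simp)
  · rw [euP_eq_swapSum]
    exact swapSum_mem_fixedSubalgebra hζd hζ (by simp)
  · dsimp only
    rw [aP_eq_swapSum]
    refine swapSum_mem_fixedSubalgebra hζd hζ ?_
    rw [← Nat.cast_add, Nat.sub_add_cancel (by omega), ZMod.natCast_self]
    simp

lemma natCast_add_eq_of_mem_support (hζ : IsPrimitiveRoot ζ d) (hd : d ≠ 0)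
    {f : MvPolynomial (Fin 4) ℂ} (hσ₀ : sig 1 1 f = f) (hσ₁ : sig ζ ζ⁻¹ f = f)
    {u : Fin 4 →₀ ℕ} (hu : u ∈ f.support) : (u 0 : ZMod d) + u 3 = u 1 + u 2 := by
  have hcoeff := coeff_sig_sig_one_one ζ ζ⁻¹ f u
  rw [hσ₀, hσ₁] at hcoeff
  have hone : ζ⁻¹ ^ (u 1 + u 2) * ζ ^ (u 0 + u 3) = 1 :=
    (mul_eq_right₀ (mem_support_iff.mp hu)).mp hcoeff.symm
  rw [inv_pow, inv_mul_eq_one₀ (pow_ne_zero _ (hζ.ne_zero hd)), eq_comm,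
    hζ.pow_eq_pow_iff_natCast_eq hd] at hone
  exact_mod_cast hone

lemma mem_basicInvariants_of_mem_fixedSubalgebra (hζ : IsPrimitiveRoot ζ d) (hd : d ≠ 0)
    {f : MvPolynomial (Fin 4) ℂ} (hf : f ∈ fixedSubalgebra (Wgroup ζ (hζ.ne_zero hd))) :
    f ∈ basicInvariants d := by
  obtain ⟨hσ₀, hσ₁⟩ := (mem_fixedSubalgebra_Wgroup_iff _).mp hf
  have h2f : 2 * f = f + sig 1 1 f := by rw [hσ₀, two_mul]
  refine Subalgebra.mem_of_two_mul_mem ?_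
  rw [h2f, add_sig_one_one_eq_sum]
  refine Subalgebra.sum_mem _ fun u hu => mul_mem (Subalgebra.algebraMap_mem _ _) ?_
  exact swapSum_mem_basicInvariants (natCast_add_eq_of_mem_support hζ hd hσ₀ hσ₁ hu)

end FixedSubalgebra

end DihedralInvariants

/-- the invariant algebra `ℂ[x,y,X,Y]^W` is generated as a `ℂ`-algebra by
`q`, `Q`, `eu₀`, `a_0`, …, `a_d`. -/
theorem stmt1 (d : ℕ) (hd : 1 ≤ d) (ζ : ℂ) (hζ : IsPrimitiveRoot ζ d) :
    Algebra.adjoin ℂ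
        ({qP, QP, euP} ∪ Set.range (fun j : Fin (d + 1) => aP d j)) =
      fixedSubalgebra (Wgroup ζ (hζ.ne_zero (by omega))) :=
  le_antisymm (DihedralInvariants.basicInvariants_le_fixedSubalgebra hζ.pow_eq_one _)
    fun _ hf => DihedralInvariants.mem_basicInvariants_of_mem_fixedSubalgebra hζ (by omega) hf
end

section
/- For every integer i ≥ 1 the following two identities hold in ℂ[T,T',T'']: 2·T'·(∂Ψ_i/∂T) + T·(∂Ψ_i/∂T'') = (i+1)·T'·Ψ_{i−1}, and 2·T''·(∂Ψ_i/∂T) + T·(∂Ψ_i/∂T') = (i+1)·T''·Ψ_{i−1}. -/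
open MvPolynomial

/-- `Ψ₀ = 1`, `Ψ₁ = T`, `Ψ_{i+2} = T·Ψ_{i+1} − T'·T''·Ψ_i`, where `T = X 0`, `T' = X 1`,
`T'' = X 2`. -/
noncomputable def Psi : ℕ → MvPolynomial (Fin 3) ℂ
  | 0 => 1
  | 1 => X 0
  | (n + 2) => X 0 * Psi (n + 1) - X 1 * X 2 * Psi n

lemma psi_aux : ∀ n : ℕ,
    2 * X 1 * pderiv (0 : Fin 3) (Psi (n + 1)) + X 0 * pderiv (2 : Fin 3) (Psi (n + 1)) =
        ((n : MvPolynomial (Fin 3) ℂ) + 2) * X 1 * Psi n ∧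
    2 * X 2 * pderiv (0 : Fin 3) (Psi (n + 1)) + X 0 * pderiv (1 : Fin 3) (Psi (n + 1)) =
        ((n : MvPolynomial (Fin 3) ℂ) + 2) * X 2 * Psi n := by
  intro n
  induction n using Nat.twoStepInduction with
  | zero =>
    constructor <;> simp [Psi, pderiv_X]
  | one =>
    have h : Psi 2 = X 0 * Psi 1 - X 1 * X 2 * Psi 0 := rfl
    rw [h]
    constructor <;>
      simp only [Psi, map_sub, pderiv_mul, pderiv_X, pderiv_one, Pi.single_eq_same,
        Pi.single_eq_of_ne (by decide : (1:Fin 3) ≠ 0), Pi.single_eq_of_ne (by decide : (2:Fin 3) ≠ 0),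
        Pi.single_eq_of_ne (by decide : (0:Fin 3) ≠ 1), Pi.single_eq_of_ne (by decide : (2:Fin 3) ≠ 1),
        Pi.single_eq_of_ne (by decide : (0:Fin 3) ≠ 2), Pi.single_eq_of_ne (by decide : (1:Fin 3) ≠ 2),
        Nat.cast_one] <;> ring
  | more n ih1 ih2 =>
    obtain ⟨ih1a, ih1b⟩ := ih1
    obtain ⟨ih2a, ih2b⟩ := ih2
    rw [show n + 1 + 1 = n + 2 from rfl] at ih2a ih2b
    have h3 : Psi (n + 3) = X 0 * Psi (n + 2) - X 1 * X 2 * Psi (n + 1) := rfl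
    have h2 : Psi (n + 2) = X 0 * Psi (n + 1) - X 1 * X 2 * Psi n := rfl
    rw [h3]
    simp only [map_sub, pderiv_mul, pderiv_X, Pi.single_eq_same,
      Pi.single_eq_of_ne (by decide : (1:Fin 3) ≠ 0), Pi.single_eq_of_ne (by decide : (2:Fin 3) ≠ 0),
      Pi.single_eq_of_ne (by decide : (0:Fin 3) ≠ 1), Pi.single_eq_of_ne (by decide : (2:Fin 3) ≠ 1),
      Pi.single_eq_of_ne (by decide : (0:Fin 3) ≠ 2), Pi.single_eq_of_ne (by decide : (1:Fin 3) ≠ 2)]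
    push_cast at ih1a ih1b ih2a ih2b ⊢
    constructor
    · linear_combination X 0 * ih2a - X 1 * X 2 * ih1a +
        (-(n : MvPolynomial (Fin 3) ℂ) - 2) * X 1 * h2
    · linear_combination X 0 * ih2b - X 1 * X 2 * ih1b +
        (-(n : MvPolynomial (Fin 3) ℂ) - 2) * X 2 * h2

/-- for `i ≥ 1`, `2T'·∂Ψ_i/∂T + T·∂Ψ_i/∂T'' = (i+1)·T'·Ψ_{i−1}` and
`2T''·∂Ψ_i/∂T + T·∂Ψ_i/∂T' = (i+1)·T''·Ψ_{i−1}`. -/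
theorem stmt5 (i : ℕ) (hi : 1 ≤ i) :
    2 * X 1 * pderiv (0 : Fin 3) (Psi i) + X 0 * pderiv (2 : Fin 3) (Psi i) =
        ((i : MvPolynomial (Fin 3) ℂ) + 1) * X 1 * Psi (i - 1) ∧
    2 * X 2 * pderiv (0 : Fin 3) (Psi i) + X 0 * pderiv (1 : Fin 3) (Psi i) =
        ((i : MvPolynomial (Fin 3) ℂ) + 1) * X 2 * Psi (i - 1) := by
  obtain ⟨n, rfl⟩ := Nat.exists_eq_add_of_le hi
  have h := psi_aux n
  simp only [Nat.add_sub_cancel_left, add_comm 1 n] at *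
  push_cast
  constructor
  · linear_combination h.1
  · linear_combination h.2
end

section
/- For every integer k ≥ 0, the family of polynomials (T'^{k−j}·T''^{i}·Ψ_{j−i}) indexed by pairs (i,j) with 0 ≤ i ≤ j ≤ k is a ℂ-basis of the homogeneous component of degree k of ℂ[T,T',T''] (each variable having degree 1). -/
open MvPolynomial

/-!
Reindex the family as `T'^b T''^c Ψ_a` with `a + b + c = k`, and let `S_k` be its span. Since
`Ψ_a` is homogeneous of degree `a`, `S_k` lies in the degree-`k` component. Conversely
`T · Ψ_{a+1} = Ψ_{a+2} + T' T'' Ψ_a` shows that multiplication by each variable maps `S_k` into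
`S_{k+1}`, and the degree-`k` component is spanned by products of `k` variables, so `S_k` is the
whole component. It then contains the monomials `T^a T'^b T''^c`, which are linearly independent
and exactly as many as the members of the family, so the family is linearly independent too.
-/

open Submodule Set

theorem LinearIndependent.of_span_le_span {K V ι : Type*} [DivisionRing K] [AddCommGroup V]
    [Module K V] [Finite ι] {f g : ι → V} (hg : LinearIndependent K g)
    (hgf : span K (range g) ≤ span K (range f)) : LinearIndependent K f := by
  have := Fintype.ofFinite ι
  rw [linearIndependent_iff_card_eq_finrank_span] at hg ⊢
  refine le_antisymm ?_ (finrank_range_le_card f)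
  rw [hg]
  have : Module.Finite K (span K (range f)) := FiniteDimensional.span_of_finite K (finite_range f)
  exact Submodule.finrank_mono hgf

theorem Psi_add_two (n : ℕ) : Psi (n + 2) = X 0 * Psi (n + 1) - X 1 * X 2 * Psi n := rfl

theorem X_zero_mul_Psi_succ (n : ℕ) : X 0 * Psi (n + 1) = Psi (n + 2) + X 1 * X 2 * Psi n := by
  rw [Psi_add_two]; ring

theorem Psi_isHomogeneous (n : ℕ) : (Psi n).IsHomogeneous n := by
  induction n using Nat.strong_induction_on with
  | _ n ih =>
    match n with
    | 0 => exact isHomogeneous_one _ _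
    | 1 => exact isHomogeneous_X _ _
    | n + 2 =>
      rw [Psi_add_two]
      refine .sub ?_ ?_
      · have := (isHomogeneous_X ℂ 0).mul (ih (n + 1) (by omega))
        rwa [show 1 + (n + 1) = n + 2 by omega] at this
      · have := ((isHomogeneous_X ℂ 1).mul (isHomogeneous_X ℂ 2)).mul (ih n (by omega))
        rwa [show 1 + 1 + n = n + 2 by omega] at this

instance (k : ℕ) : Finite {p : ℕ × ℕ // p.1 ≤ p.2 ∧ p.2 ≤ k} :=
  ((finite_Iic (k, k)).subset fun _ hp => ⟨hp.1.trans hp.2, hp.2⟩).to_subtype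

noncomputable def psiFamily (k : ℕ) (p : {p : ℕ × ℕ // p.1 ≤ p.2 ∧ p.2 ≤ k}) :
    MvPolynomial (Fin 3) ℂ :=
  X 1 ^ (k - p.1.2) * X 2 ^ p.1.1 * Psi (p.1.2 - p.1.1)

theorem psiFamily_isHomogeneous (k : ℕ) (p : {p : ℕ × ℕ // p.1 ≤ p.2 ∧ p.2 ≤ k}) :
    (psiFamily k p).IsHomogeneous k := by
  obtain ⟨⟨i, j⟩, hij, hjk⟩ := p
  have := (((isHomogeneous_X ℂ 1).pow (k - j)).mul ((isHomogeneous_X ℂ 2).pow i)).mul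
    (Psi_isHomogeneous (j - i))
  rwa [show 1 * (k - j) + 1 * i + (j - i) = k by simp only at hij hjk; omega] at this

theorem mem_span_psiFamily {a b c k : ℕ} (h : a + b + c = k) :
    X 1 ^ b * X 2 ^ c * Psi a ∈ span ℂ (range (psiFamily k)) :=
  subset_span ⟨⟨(c, a + c), by omega, by omega⟩, by
    simp only [psiFamily, show k - (a + c) = b by omega, Nat.add_sub_cancel]⟩

theorem mul_X_mem_span_psiFamily_succ {a b c k : ℕ} (h : a + b + c = k) (n : Fin 3) :
    X 1 ^ b * X 2 ^ c * Psi a * X n ∈ span ℂ (range (psiFamily (k + 1))) := by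
  match n, a with
  | 0, 0 =>
    convert mem_span_psiFamily (a := 1) (b := b) (c := c) (k := k + 1) (by omega) using 1
    simp [Psi]
  | 0, a + 1 =>
    have e : X 1 ^ b * X 2 ^ c * Psi (a + 1) * X 0 =
        X 1 ^ b * X 2 ^ c * Psi (a + 2) + X 1 ^ (b + 1) * X 2 ^ (c + 1) * Psi a := by
      rw [mul_assoc, mul_comm _ (X 0), X_zero_mul_Psi_succ]; ring
    rw [e]
    exact add_mem (mem_span_psiFamily (by omega)) (mem_span_psiFamily (by omega))
  | 1, a =>
    convert mem_span_psiFamily (a := a) (b := b + 1) (c := c) (k := k + 1) (by omega) using 1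
    ring
  | 2, a =>
    convert mem_span_psiFamily (a := a) (b := b) (c := c + 1) (k := k + 1) (by omega) using 1
    ring

theorem span_psiFamily (k : ℕ) :
    span ℂ (range (psiFamily k)) = homogeneousSubmodule (Fin 3) ℂ k := by
  refine le_antisymm (span_le.2 ?_) ?_
  · rintro _ ⟨p, rfl⟩
    exact psiFamily_isHomogeneous k p
  rw [← homogeneousSubmodule_one_pow]
  induction k with
  | zero =>
    rw [pow_zero, Submodule.one_le]
    simpa [Psi] using mem_span_psiFamily (a := 0) (b := 0) (c := 0) rfl
  | succ k ih =>
    rw [pow_succ]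
    refine (mul_le_mul' ih le_rfl).trans ?_
    rw [homogeneousSubmodule_one_eq_span_X, span_mul_span, span_le]
    rintro _ ⟨_, ⟨⟨⟨i, j⟩, hij, hjk⟩, rfl⟩, _, ⟨n, rfl⟩, rfl⟩
    simp only at hij hjk
    exact mul_X_mem_span_psiFamily_succ (a := j - i) (b := k - j) (c := i) (by omega) n

theorem linearIndependent_psiFamily (k : ℕ) : LinearIndependent ℂ (psiFamily k) := by
  let e (p : {p : ℕ × ℕ // p.1 ≤ p.2 ∧ p.2 ≤ k}) : Fin 3 →₀ ℕ :=
    .single 0 (p.1.2 - p.1.1) + .single 1 (k - p.1.2) + .single 2 p.1.1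
  have he : e.Injective := by
    rintro ⟨⟨i, j⟩, hij, hjk⟩ ⟨⟨i', j'⟩, hij', hjk'⟩ h
    have h1 : k - j = k - j' := by simpa [e] using DFunLike.congr_fun h 1
    have h2 : i = i' := by simpa [e] using DFunLike.congr_fun h 2
    simp only at hjk hjk'
    exact Subtype.ext (Prod.ext h2 (show j = j' by omega))
  refine .of_span_le_span (g := fun p => monomial (e p) (1 : ℂ)) ?_ ?_
  · have := (basisMonomials (Fin 3) ℂ).linearIndependent.comp e he
    rwa [coe_basisMonomials] at this
  rw [span_psiFamily, span_le]
  rintro _ ⟨⟨⟨i, j⟩, hij, hjk⟩, rfl⟩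
  refine isHomogeneous_monomial _ ?_
  simp only at hij hjk
  simp only [e, map_add, Finsupp.degree_single]
  omega

/-- the family `(T'^{k−j}·T''^{i}·Ψ_{j−i})_{0 ≤ i ≤ j ≤ k}` is a `ℂ`-basis of
the degree-`k` homogeneous component of `ℂ[T,T',T'']`. -/
theorem stmt6 (k : ℕ) :
    LinearIndependent ℂ (fun p : {p : ℕ × ℕ // p.1 ≤ p.2 ∧ p.2 ≤ k} =>
        X 1 ^ (k - p.1.2) * X 2 ^ p.1.1 * Psi (p.1.2 - p.1.1)) ∧
    Submodule.span ℂ (Set.range (fun p : {p : ℕ × ℕ // p.1 ≤ p.2 ∧ p.2 ≤ k} =>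
        X 1 ^ (k - p.1.2) * X 2 ^ p.1.1 * Psi (p.1.2 - p.1.1))) =
      homogeneousSubmodule (Fin 3) ℂ k :=
  ⟨linearIndependent_psiFamily k, span_psiFamily k⟩
end

section
/- The family of polynomials (A_{i−1}·A_{j+1} − A_i·A_j) indexed by pairs (i,j) with 1 ≤ i ≤ j ≤ d−1 is a ℂ-basis of the intersection of ker(ε) with the homogeneous component of degree 2 of ℂ[A_0,…,A_d] (each variable A_i having degree 1). -/
open MvPolynomial

/-- The variable `A_j` of `ℂ[A_0,…,A_d]` (for `0 ≤ j ≤ d`; the value for `j > d` is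
irrelevant). -/
noncomputable def Av (d j : ℕ) : MvPolynomial (Fin (d + 1)) ℂ :=
  if h : j < d + 1 then X ⟨j, h⟩ else 0

/-- The homomorphism `ε : ℂ[A_0,…,A_d] → ℂ[t,u]`, `A_i ↦ t^{d−i}·u^i`, with `t = X 0`,
`u = X 1`. -/
noncomputable def eps (d : ℕ) : MvPolynomial (Fin (d + 1)) ℂ →ₐ[ℂ] MvPolynomial (Fin 2) ℂ :=
  MvPolynomial.aeval (fun i => X 0 ^ (d - (i : ℕ)) * X 1 ^ (i : ℕ))


lemma Av_eq (d j : ℕ) (h : j < d + 1) : Av d j = X ⟨j, h⟩ := dif_pos h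

lemma eps_Av (d j : ℕ) (h : j < d + 1) :
    eps d (Av d j) = X 0 ^ (d - j) * X 1 ^ j := by
  rw [Av_eq d j h, eps, aeval_X]

lemma single_add_single_eq {α : Type*} [DecidableEq α] {a b c e : α} :
    Finsupp.single a 1 + Finsupp.single b 1 = Finsupp.single c 1 + Finsupp.single e 1 ↔
      (a = c ∧ b = e) ∨ (a = e ∧ b = c) := by
  constructor
  · intro h
    have hac : a = c ∨ a = e := by
      by_contra hcon
      push_neg at hcon
      have := DFunLike.congr_fun h a
      simp [Finsupp.single_apply, Ne.symm hcon.1, Ne.symm hcon.2] at this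
    rcases hac with rfl | rfl
    · left
      have := add_left_cancel h
      rw [Finsupp.single_eq_single_iff] at this
      simp at this
      exact ⟨rfl, this⟩
    · right
      rw [add_comm (Finsupp.single c 1)] at h
      have := add_left_cancel h
      rw [Finsupp.single_eq_single_iff] at this
      simp at this
      exact ⟨rfl, this⟩
  · rintro (⟨rfl, rfl⟩ | ⟨rfl, rfl⟩)
    · rfl
    · exact add_comm _ _

lemma X_mul_X {σ : Type*} [DecidableEq σ] (a b : σ) :
    (X a * X b : MvPolynomial σ ℂ) =
      monomial (Finsupp.single a 1 + Finsupp.single b 1) 1 := by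
  rw [X, X, monomial_mul, one_mul]

lemma coeff_X_mul_X {σ : Type*} [DecidableEq σ] (a b : σ) (μ : σ →₀ ℕ) :
    coeff μ (X a * X b : MvPolynomial σ ℂ) =
      if Finsupp.single a 1 + Finsupp.single b 1 = μ then 1 else 0 := by
  rw [X_mul_X, coeff_monomial]

section
variable (d : ℕ)

/-- index type -/
abbrev PIdx := {p : ℕ × ℕ // 1 ≤ p.1 ∧ p.1 ≤ p.2 ∧ p.2 ≤ d - 1}

noncomputable def fam (p : PIdx d) : MvPolynomial (Fin (d + 1)) ℂ :=
  Av d (p.1.1 - 1) * Av d (p.1.2 + 1) - Av d p.1.1 * Av d p.1.2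

lemma fam_eq (hd : 1 ≤ d) (p : PIdx d) :
    fam d p = X ⟨p.1.1 - 1, by omega⟩ * X ⟨p.1.2 + 1, by obtain ⟨h1,h2,h3⟩ := p.2; omega⟩
      - X ⟨p.1.1, by obtain ⟨h1,h2,h3⟩ := p.2; omega⟩ *
        X ⟨p.1.2, by obtain ⟨h1,h2,h3⟩ := p.2; omega⟩ := by
  obtain ⟨h1, h2, h3⟩ := p.2
  rw [fam, Av_eq d _ (by omega), Av_eq d _ (by omega), Av_eq d _ (by omega),
    Av_eq d _ (by omega)]

lemma coeff_fam (hd : 1 ≤ d) (p : PIdx d) (μ : Fin (d+1) →₀ ℕ) :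
    coeff μ (fam d p) =
      (if Finsupp.single (⟨p.1.1 - 1, by obtain ⟨h1,h2,h3⟩ := p.2; omega⟩ : Fin (d+1)) 1
          + Finsupp.single (⟨p.1.2 + 1, by obtain ⟨h1,h2,h3⟩ := p.2; omega⟩ : Fin (d+1)) 1 = μ
        then 1 else 0)
      - (if Finsupp.single (⟨p.1.1, by obtain ⟨h1,h2,h3⟩ := p.2; omega⟩ : Fin (d+1)) 1
          + Finsupp.single (⟨p.1.2, by obtain ⟨h1,h2,h3⟩ := p.2; omega⟩ : Fin (d+1)) 1 = μ
        then 1 else 0) := by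
  rw [fam_eq d hd p, coeff_sub, coeff_X_mul_X, coeff_X_mul_X]

lemma indep (hd : 1 ≤ d) : LinearIndependent ℂ (fam d) := by
  rw [linearIndependent_iff']
  intro s g hsum p hp
  suffices H : ∀ n : ℕ, ∀ p ∈ s, p.1.2 - p.1.1 ≤ n → g p = 0 by exact H _ p hp le_rfl
  intro n
  induction n using Nat.strong_induction_on with
  | _ n IH =>
    intro p hp hpn
    obtain ⟨hp1, hp2, hp3⟩ := p.2
    set μ : Fin (d+1) →₀ ℕ :=
      Finsupp.single (⟨p.1.1, by omega⟩ : Fin (d+1)) 1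
        + Finsupp.single (⟨p.1.2, by omega⟩ : Fin (d+1)) 1 with hμ
    have h0 := congrArg (coeff μ) hsum
    rw [coeff_zero] at h0
    rw [show coeff μ (∑ q ∈ s, g q • fam d q) = ∑ q ∈ s, g q * coeff μ (fam d q) by
      rw [MvPolynomial.coeff_sum]; exact Finset.sum_congr rfl fun q _ => by
        rw [coeff_smul, smul_eq_mul]] at h0
    rw [Finset.sum_eq_single p] at h0
    · -- the diagonal term is -(g p)
      rw [coeff_fam d hd p μ, hμ] at h0
      rw [if_neg, if_pos rfl] at h0
      · simpa using h0
      · rw [single_add_single_eq]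
        simp only [Fin.mk.injEq]
        omega
    · intro q hq hqp
      rw [coeff_fam d hd q μ, hμ]
      obtain ⟨hq1, hq2, hq3⟩ := q.2
      split_ifs with hA hB hB
      · rw [single_add_single_eq] at hB
        simp only [Fin.mk.injEq] at hB
        exact absurd (Subtype.ext (Prod.ext (by omega) (by omega))) hqp
      · rw [single_add_single_eq] at hA
        simp only [Fin.mk.injEq] at hA
        have : q.1.2 - q.1.1 < n := by omega
        rw [IH _ this q hq le_rfl, zero_mul]
      · rw [single_add_single_eq] at hB
        simp only [Fin.mk.injEq] at hB
        exact absurd (Subtype.ext (Prod.ext (by omega) (by omega))) hqp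
      · simp
    · intro h; exact absurd hp h

/-- standard monomial of total index s -/
noncomputable def std (s : ℕ) : MvPolynomial (Fin (d + 1)) ℂ :=
  if s ≤ d then Av d 0 * Av d s else Av d (s - d) * Av d d

lemma pow_mul_pow (a1 b1 a2 b2 : ℕ) :
    (X 0 ^ a1 * X 1 ^ b1) * (X 0 ^ a2 * X 1 ^ b2)
      = (X 0 ^ (a1 + a2) * X 1 ^ (b1 + b2) : MvPolynomial (Fin 2) ℂ) := by
  rw [pow_add, pow_add]; ring

lemma eps_std (hd : 1 ≤ d) {s : ℕ} (hs : s ≤ 2 * d) :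
    eps d (std d s) = X 0 ^ (2 * d - s) * X 1 ^ s := by
  rw [std]
  split_ifs with h
  · rw [map_mul, eps_Av d 0 (by omega), eps_Av d s (by omega), pow_mul_pow,
      show d - 0 + (d - s) = 2 * d - s from by omega, show 0 + s = s from by omega]
  · rw [map_mul, eps_Av d (s - d) (by omega), eps_Av d d (by omega), pow_mul_pow,
      show d - (s - d) + (d - d) = 2 * d - s from by omega,
      show s - d + d = s from by omega]

lemma eps_fam (hd : 1 ≤ d) (p : PIdx d) : eps d (fam d p) = 0 := by
  obtain ⟨⟨i, j⟩, h1, h2, h3⟩ := p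
  show eps d (Av d (i - 1) * Av d (j + 1) - Av d i * Av d j) = 0
  rw [map_sub, map_mul, map_mul, eps_Av d _ (by omega), eps_Av d _ (by omega),
    eps_Av d _ (by omega), eps_Av d _ (by omega), pow_mul_pow, pow_mul_pow, sub_eq_zero,
    show d - (i - 1) + (d - (j + 1)) = d - i + (d - j) from by omega,
    show i - 1 + (j + 1) = i + j from by omega]

lemma fam_homog (hd : 1 ≤ d) (p : PIdx d) : (fam d p).IsHomogeneous 2 := by
  rw [fam_eq d hd p]
  exact ((isHomogeneous_X _ _).mul (isHomogeneous_X _ _)).sub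
    ((isHomogeneous_X _ _).mul (isHomogeneous_X _ _))

lemma red (hd : 1 ≤ d) : ∀ i j : ℕ, (hi : i ≤ j) → (hj : j ≤ d) →
    (X (⟨i, by omega⟩ : Fin (d + 1)) * X (⟨j, by omega⟩ : Fin (d + 1)) - std d (i + j))
      ∈ Submodule.span ℂ (Set.range (fam d)) := by
  intro i
  induction i using Nat.strong_induction_on with
  | _ i IH =>
    intro j hi hj
    rcases Nat.eq_zero_or_pos i with rfl | hi1
    · rw [std, if_pos (by omega), Av_eq d 0 (by omega), Av_eq d _ (by omega)]
      simp
    rcases Nat.eq_or_lt_of_le hj with hjd | hj1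
    · rw [std, if_neg (by omega), Av_eq d _ (by omega), Av_eq d _ (by omega)]
      have hz : (X (⟨i, by omega⟩ : Fin (d + 1)) * X (⟨j, by omega⟩ : Fin (d + 1))
            : MvPolynomial (Fin (d + 1)) ℂ)
          - X (⟨i + j - d, by omega⟩ : Fin (d + 1)) * X (⟨d, by omega⟩ : Fin (d + 1)) = 0 := by
        rw [sub_eq_zero]
        have e1 : (⟨i, by omega⟩ : Fin (d + 1)) = ⟨i + j - d, by omega⟩ := by
          simp only [Fin.mk.injEq]; omega
        have e2 : (⟨j, by omega⟩ : Fin (d + 1)) = ⟨d, by omega⟩ := by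
          simp only [Fin.mk.injEq]; omega
        rw [e1, e2]
      rw [hz]
      exact Submodule.zero_mem _
    · -- i ≥ 1, j ≤ d - 1
      set p : PIdx d := ⟨(i, j), hi1, hi, by omega⟩ with hpdef
      have hfam : fam d p ∈ Submodule.span ℂ (Set.range (fam d)) :=
        Submodule.subset_span ⟨p, rfl⟩
      have hprev := IH (i - 1) (by omega) (j + 1) (by omega) (by omega)
      rw [show (i - 1) + (j + 1) = i + j by omega] at hprev
      have : (X (⟨i, by omega⟩ : Fin (d + 1)) * X (⟨j, by omega⟩ : Fin (d + 1))
          - std d (i + j))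
          = (X (⟨i - 1, by omega⟩ : Fin (d + 1)) * X (⟨j + 1, by omega⟩ : Fin (d + 1))
            - std d (i + j)) - fam d p := by
        rw [fam_eq d hd p]
        ring
      rw [this]
      exact Submodule.sub_mem _ hprev hfam

lemma exists_pair {σ : Type*} [LinearOrder σ] {m : σ →₀ ℕ} (h : m.degree = 2) :
    ∃ a b : σ, a ≤ b ∧ m = Finsupp.single a 1 + Finsupp.single b 1 := by
  have hc : Multiset.card (Finsupp.toMultiset m) = 2 := by
    rw [Finsupp.card_toMultiset, ← h, Finsupp.degree]; rfl
  obtain ⟨a, b, hab⟩ := Multiset.card_eq_two.mp hc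
  have key : ∀ a b : σ, Finsupp.toMultiset m = {a, b} →
      m = Finsupp.single a 1 + Finsupp.single b 1 := by
    intro a b hab
    have h2 := congrArg Multiset.toFinsupp hab
    rwa [Finsupp.toMultiset_toFinsupp,
      show ({a, b} : Multiset σ) = {a} + {b} from (Multiset.singleton_add a {b}).symm,
      Multiset.toFinsupp_add, Multiset.toFinsupp_singleton, Multiset.toFinsupp_singleton] at h2
  rcases le_total a b with h' | h'
  · exact ⟨a, b, h', key a b hab⟩
  · refine ⟨b, a, h', key b a ?_⟩
    rw [hab]
    exact Multiset.pair_comm a b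

lemma span_le_ker (hd : 1 ≤ d) {x : MvPolynomial (Fin (d + 1)) ℂ}
    (hx : x ∈ Submodule.span ℂ (Set.range (fam d))) : eps d x = 0 := by
  have : Submodule.span ℂ (Set.range (fam d)) ≤
      Submodule.restrictScalars ℂ (RingHom.ker (eps d)) := by
    rw [Submodule.span_le]
    rintro _ ⟨p, rfl⟩
    simp only [Submodule.restrictScalars_mem, SetLike.mem_coe, RingHom.mem_ker]
    exact eps_fam d hd p
  exact RingHom.mem_ker.mp (this hx)

lemma span_eq (hd : 1 ≤ d) :
    Submodule.span ℂ (Set.range (fam d)) =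
      Submodule.restrictScalars ℂ (RingHom.ker (eps d)) ⊓
        homogeneousSubmodule (Fin (d + 1)) ℂ 2 := by
  apply le_antisymm
  · rw [Submodule.span_le]
    rintro _ ⟨p, rfl⟩
    refine ⟨?_, ?_⟩
    · simp only [Submodule.restrictScalars_mem, SetLike.mem_coe, RingHom.mem_ker]
      exact eps_fam d hd p
    · exact (mem_homogeneousSubmodule _ _).mpr (fam_homog d hd p)
  · intro p hp
    rw [Submodule.mem_inf] at hp
    obtain ⟨hker, hhom⟩ := hp
    rw [Submodule.restrictScalars_mem, RingHom.mem_ker] at hker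
    rw [mem_homogeneousSubmodule] at hhom
    set S := Submodule.span ℂ (Set.range (fam d)) with hS
    set stds : Fin (2 * d + 1) → MvPolynomial (Fin (d + 1)) ℂ := fun s => std d s with hstds
    -- p lies in S ⊔ span of standard monomials
    have hpT : p ∈ S ⊔ Submodule.span ℂ (Set.range stds) := by
      rw [← support_sum_monomial_coeff p]
      apply Submodule.sum_mem
      intro m hm
      have hcm : coeff m p ≠ 0 := by rwa [MvPolynomial.mem_support_iff] at hm
      have hdeg : m.degree = 2 := by
        rw [Finsupp.degree_eq_weight_one]
        exact hhom hcm
      obtain ⟨a, b, hab, rfl⟩ := exists_pair hdeg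
      rw [show monomial (Finsupp.single a 1 + Finsupp.single b 1) (coeff _ p)
          = (coeff (Finsupp.single a 1 + Finsupp.single b 1) p) • (X a * X b) by
        rw [X_mul_X, smul_monomial, smul_eq_mul, mul_one]]
      apply Submodule.smul_mem
      have hred := red d hd a b hab (Nat.lt_succ_iff.mp b.isLt)
      rw [Fin.eta, Fin.eta] at hred
      have : (X a * X b : MvPolynomial (Fin (d + 1)) ℂ)
          = (X a * X b - std d (↑a + ↑b)) + std d (↑a + ↑b) := by ring
      rw [this]
      refine Submodule.add_mem _ (Submodule.mem_sup_left hred) (Submodule.mem_sup_right ?_)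
      exact Submodule.subset_span
        ⟨⟨(a : ℕ) + b, by have := a.isLt; have := b.isLt; omega⟩, rfl⟩
    obtain ⟨q, hq, r, hr, hqr⟩ := Submodule.mem_sup.mp hpT
    obtain ⟨c, hc⟩ := (Submodule.mem_span_range_iff_exists_fun ℂ).mp hr
    -- apply eps
    have hepsr : eps d r = 0 := by
      have h' : eps d p = eps d q + eps d r := by rw [← hqr, map_add]
      rw [hker, span_le_ker d hd hq, zero_add] at h'
      exact h'.symm
    have h0 : ∑ i : Fin (2 * d + 1),
        c i • (X 0 ^ (2 * d - (i : ℕ)) * X 1 ^ (i : ℕ) : MvPolynomial (Fin 2) ℂ) = 0 := by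
      rw [← hepsr, ← hc, map_sum]
      exact Finset.sum_congr rfl fun i _ => by
        rw [map_smul, eps_std d hd (Nat.lt_succ_iff.mp i.isLt)]
    have hall : ∀ i : Fin (2 * d + 1), c i = 0 := by
      intro t
      set ν : Fin 2 →₀ ℕ := Finsupp.single 0 (2 * d - (t : ℕ)) + Finsupp.single 1 (t : ℕ)
        with hν
      have h1 := congrArg (coeff ν) h0
      rw [coeff_zero, MvPolynomial.coeff_sum] at h1
      have hco : ∀ i : Fin (2 * d + 1),
          coeff ν (c i • (X 0 ^ (2 * d - (i : ℕ)) * X 1 ^ (i : ℕ) : MvPolynomial (Fin 2) ℂ))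
            = c i * (if ((i : ℕ) = (t : ℕ)) then 1 else 0) := by
        intro i
        rw [coeff_smul, smul_eq_mul, X_pow_eq_monomial, X_pow_eq_monomial, monomial_mul,
          one_mul, coeff_monomial]
        congr 1
        by_cases hit : (i : ℕ) = (t : ℕ)
        · have hcond : Finsupp.single (0 : Fin 2) (2 * d - (i : ℕ)) + Finsupp.single 1 (i : ℕ)
              = ν := by rw [hν, hit]
          rw [if_pos hcond, if_pos hit]
        · rw [if_neg hit, if_neg]
          intro hcontra
          apply hit
          have := DFunLike.congr_fun hcontra (1 : Fin 2)
          simpa [hν, Finsupp.single_apply, Finsupp.add_apply,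
            show ((0 : Fin 2) = 1) = False from by simp [Fin.ext_iff]] using this
      rw [Finset.sum_congr rfl fun i _ => hco i, Finset.sum_eq_single t] at h1
      · rw [if_pos rfl, mul_one] at h1
        exact h1
      · intro b _ hbt
        rw [if_neg (fun h => hbt (Fin.ext h)), mul_zero]
      · intro h; exact absurd (Finset.mem_univ t) h
    have hr0 : r = 0 := by
      rw [← hc]
      exact Finset.sum_eq_zero fun i _ => by rw [hall i, zero_smul]
    rw [← hqr, hr0, add_zero]
    exact hq

end

/-- the family `(A_{i−1}·A_{j+1} − A_i·A_j)_{1 ≤ i ≤ j ≤ d−1}` is a `ℂ`-basis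
of `ker ε ∩ ℂ[A_0,…,A_d]_2`, the intersection of the kernel of `ε` with the degree-`2`
homogeneous component. -/
theorem stmt11 (d : ℕ) (hd : 1 ≤ d) :
    LinearIndependent ℂ (fun p : {p : ℕ × ℕ // 1 ≤ p.1 ∧ p.1 ≤ p.2 ∧ p.2 ≤ d - 1} =>
        Av d (p.1.1 - 1) * Av d (p.1.2 + 1) - Av d p.1.1 * Av d p.1.2) ∧
    Submodule.span ℂ (Set.range
        (fun p : {p : ℕ × ℕ // 1 ≤ p.1 ∧ p.1 ≤ p.2 ∧ p.2 ≤ d - 1} =>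
          Av d (p.1.1 - 1) * Av d (p.1.2 + 1) - Av d p.1.1 * Av d p.1.2)) =
      Submodule.restrictScalars ℂ (RingHom.ker (eps d)) ⊓
        homogeneousSubmodule (Fin (d + 1)) ℂ 2 := by
  exact ⟨indep d hd, span_eq d hd⟩
end

section
/- Assume d ≥ 2. Let K₂ ⊆ ℂ[A_0,…,A_d] be the ℂ-linear span of the polynomials B_{i,j} := A_{i−1}·A_{j+1} − A_i·A_j for 1 ≤ i ≤ j ≤ d−1 (these form a basis of K₂), and let ρ : K₂ → ℂ[T,U,V] be the ℂ-linear map with ρ(B_{i,j}) = U^{d−j−1}·V^{i−1}·Ψ_{j−i}(T,U,V), where Ψ_k(T,U,V) denotes Ψ_k evaluated at T' = U, T'' = V. Let δ and δ̂ be the ℂ-derivations of ℂ[A_0,…,A_d] with δ(A_k) = k·A_{k−1} and δ̂(A_k) = (d−k)·A_{k+1} (conventions A_{−1} := 0, A_{d+1} := 0), and let δ', δ̂' be the ℂ-derivations of ℂ[T,U,V] with δ'(T) = 2U, δ'(U) = 0, δ'(V) = T and δ̂'(T) = 2V, δ̂'(V) = 0, δ̂'(U) = T. Then: (a) δ and δ̂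 map K₂ into K₂; (b) ρ is a ℂ-linear isomorphism from K₂ onto the homogeneous component of degree d−2 of ℂ[T,U,V]; (c) ρ(δ(z)) = δ'(ρ(z)) and ρ(δ̂(z)) = δ̂'(ρ(z)) for all z ∈ K₂. -/
/-!
The polynomials `U^a V^b Ψ_c` with `a + b + c = n` span the degree-`n` component of
`ℂ[T,U,V]`: multiplying them by `T` stays in their span because
`T Ψ_c = Ψ_{c+1} + U V Ψ_{c-1}`. For `n = d - 2` they are exactly the images `ρ(B_{i,j})`, and
there are no more generators `B_{i,j}` than degree-`(d-2)` monomials, so `ρ` is onto the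
component and injective by counting dimensions.

For (a) and (c), regard `ρ` as a partial linear map on `ℂ[A_0,…,A_d]` with domain `K₂`. Both
say that `(z, w) ↦ (δ z, δ' w)` maps the graph of `ρ` into itself, which needs checking only on
the generators, where `δ(B_{b+1,b+c+1}) = b B_{b,b+c+1} + (b+c+1) B_{b+1,b+c}` matches
`δ'(U^a V^b Ψ_c) = b U^a V^{b-1} Ψ_{c+1} + (b+c+1) U^{a+1} V^b Ψ_{c-1}`; similarly for `δ̂`.
-/

open MvPolynomial

/-- `B_{i,j} = A_{i−1}·A_{j+1} − A_i·A_j`. -/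
noncomputable def Brel (d i j : ℕ) : MvPolynomial (Fin (d + 1)) ℂ :=
  Av d (i - 1) * Av d (j + 1) - Av d i * Av d j

/-- The family `(B_{i,j})_{1 ≤ i ≤ j ≤ d−1}`. -/
noncomputable def Bfam (d : ℕ) (p : {p : ℕ × ℕ // 1 ≤ p.1 ∧ p.1 ≤ p.2 ∧ p.2 ≤ d - 1}) :
    MvPolynomial (Fin (d + 1)) ℂ :=
  Brel d p.1.1 p.1.2

/-- `K₂`, the `ℂ`-linear span of the `B_{i,j}` for `1 ≤ i ≤ j ≤ d−1`. -/
noncomputable def K2 (d : ℕ) : Submodule ℂ (MvPolynomial (Fin (d + 1)) ℂ) :=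
  Submodule.span ℂ (Set.range (Bfam d))

/-- The `ℂ`-derivation `δ` of `ℂ[A_0,…,A_d]` with `δ(A_k) = k·A_{k−1}`
(convention `A_{−1} = 0`). -/
noncomputable def deltaD (d : ℕ) (f : MvPolynomial (Fin (d + 1)) ℂ) :
    MvPolynomial (Fin (d + 1)) ℂ :=
  ∑ k : Fin (d + 1), C ((k : ℕ) : ℂ) * Av d ((k : ℕ) - 1) * pderiv k f

/-- The `ℂ`-derivation `δ̂` of `ℂ[A_0,…,A_d]` with `δ̂(A_k) = (d−k)·A_{k+1}`
(convention `A_{d+1} = 0`). -/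
noncomputable def deltaHatD (d : ℕ) (f : MvPolynomial (Fin (d + 1)) ℂ) :
    MvPolynomial (Fin (d + 1)) ℂ :=
  ∑ k : Fin (d + 1), C ((d - (k : ℕ) : ℕ) : ℂ) * Av d ((k : ℕ) + 1) * pderiv k f

/-- The `ℂ`-derivation `δ'` of `ℂ[T,U,V]` with `δ'(T) = 2U`, `δ'(U) = 0`, `δ'(V) = T`. -/
noncomputable def deltaD' (f : MvPolynomial (Fin 3) ℂ) : MvPolynomial (Fin 3) ℂ :=
  2 * X 1 * pderiv 0 f + X 0 * pderiv 2 f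

/-- The `ℂ`-derivation `δ̂'` of `ℂ[T,U,V]` with `δ̂'(T) = 2V`, `δ̂'(V) = 0`, `δ̂'(U) = T`. -/
noncomputable def deltaHatD' (f : MvPolynomial (Fin 3) ℂ) : MvPolynomial (Fin 3) ℂ :=
  2 * X 2 * pderiv 0 f + X 0 * pderiv 1 f

section LinearAlgebra

variable {R M N : Type*} [Ring R] [AddCommGroup M] [Module R M] [AddCommGroup N] [Module R N]

theorem LinearPMap.prodMap_mem_graph_of_span {s : Set M} (ρ : Submodule.span R s →ₗ[R] N)
    (D : M →ₗ[R] M) (D' : N →ₗ[R] N)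
    (h : ∀ x (hx : x ∈ s),
      (D x, D' (ρ ⟨x, Submodule.subset_span hx⟩)) ∈ (LinearPMap.mk _ ρ).graph)
    (z : Submodule.span R s) : (D z, D' (ρ z)) ∈ (LinearPMap.mk _ ρ).graph := by
  let L := (D ∘ₗ (Submodule.span R s).subtype).prod (D' ∘ₗ ρ)
  have : ⊤ ≤ (LinearPMap.mk _ ρ).graph.comap L := by
    rw [← Submodule.span_span_coe_preimage, Submodule.span_le]
    exact fun x hx => h x hx
  exact this trivial

theorem LinearMap.injective_of_finrank_le_finrank_range {K V W : Type*} [DivisionRing K]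
    [AddCommGroup V] [Module K V] [FiniteDimensional K V] [AddCommGroup W] [Module K W]
    {f : V →ₗ[K] W}
    (h : Module.finrank K V ≤ Module.finrank K (LinearMap.range f)) : Function.Injective f := by
  have := f.finrank_range_add_finrank_ker
  rw [← LinearMap.ker_eq_bot, ← Submodule.finrank_eq_zero]
  omega

end LinearAlgebra

theorem nsmul_mem_of_ne_zero {S M : Type*} [AddMonoid M] [SetLike S M] [AddSubmonoidClass S M]
    {s : S} {x : M} (n : ℕ) (h : n ≠ 0 → x ∈ s) : n • x ∈ s := by
  rcases eq_or_ne n 0 with rfl | hn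
  · rw [zero_smul]; exact zero_mem s
  · exact nsmul_mem (h hn) n

theorem MvPolynomial.finrank_homogeneousSubmodule {σ K : Type*} [Finite σ] [Field K] (n : ℕ) :
    Module.finrank K (homogeneousSubmodule σ K n) = Nat.card {m : σ →₀ ℕ // m.degree = n} := by
  rw [homogeneousSubmodule_eq_finsupp_supported]
  exact Module.finrank_eq_nat_card_basis (basisRestrictSupport K {m : σ →₀ ℕ | m.degree = n})

theorem MvPolynomial.homogeneousSubmodule_eq_span_monomial {σ R : Type*} [CommSemiring R] (n : ℕ) :
    homogeneousSubmodule σ R n =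
      Submodule.span R ((monomial · 1) '' {m : σ →₀ ℕ | m.degree = n}) := by
  rw [homogeneousSubmodule_eq_finsupp_supported]
  exact restrictSupport_eq_span R _

theorem MvPolynomial.sum_mul_pderiv_eq_mkDerivation {σ R : Type*} [Fintype σ] [CommSemiring R]
    (f : σ → MvPolynomial σ R) (p : MvPolynomial σ R) :
    ∑ k, f k * pderiv k p = mkDerivation R f p := by
  classical
  have sum_apply (q : MvPolynomial σ R) : (∑ k, f k • pderiv k) q = ∑ k, f k * pderiv k q := by
    rw [← Derivation.coeFnAddMonoidHom_apply, map_sum, Finset.sum_apply]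
    rfl
  have hD : ∑ k, f k • pderiv k = mkDerivation R f := derivation_ext fun i => by
    simp [sum_apply, pderiv_X, Pi.single_apply]
  rw [← sum_apply, hD]

/-- `Ψ_{c-1}`, with the convention `Ψ_{-1} = 0` that makes the recurrence hold from `c = 0`. -/
noncomputable def psiPrev : ℕ → MvPolynomial (Fin 3) ℂ
  | 0 => 0
  | c + 1 => Psi c

theorem psiPrev_succ (c : ℕ) : psiPrev (c + 1) = Psi c := rfl

theorem X_zero_mul_Psi (c : ℕ) : X 0 * Psi c = Psi (c + 1) + X 1 * X 2 * psiPrev c := by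
  cases c with
  | zero => simp [Psi, psiPrev]
  | succ c => simp only [Psi, psiPrev]; ring

theorem isHomogeneous_Psi : ∀ c, (Psi c).IsHomogeneous c
  | 0 => isHomogeneous_one _ _
  | 1 => isHomogeneous_X _ _
  | c + 2 => by
    have hT : (X 0 * Psi (c + 1)).IsHomogeneous (1 + (c + 1)) :=
      (isHomogeneous_X _ _).mul (isHomogeneous_Psi (c + 1))
    have hUV : (X 1 * X 2 * Psi c).IsHomogeneous (1 + 1 + c) :=
      ((isHomogeneous_X _ _).mul (isHomogeneous_X _ _)).mul (isHomogeneous_Psi c)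
    rw [show 1 + (c + 1) = c + 2 by omega] at hT
    rw [show 1 + 1 + c = c + 2 by omega] at hUV
    exact hT.sub hUV

section Derivation

variable (D : Derivation ℂ (MvPolynomial (Fin 3) ℂ) (MvPolynomial (Fin 3) ℂ))

theorem derivation_Psi {W : MvPolynomial (Fin 3) ℂ} (hT : D (X 0) = 2 * W)
    (hUV : D (X 1 * X 2) = X 0 * W) : ∀ c : ℕ, D (Psi c) = (c + 1) * W * psiPrev c
  | 0 => by simp [Psi, psiPrev]
  | 1 => by simp only [Psi, psiPrev, hT]; ring
  | c + 2 => by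
    have ih₁ := derivation_Psi hT hUV (c + 1)
    have ih₀ := derivation_Psi hT hUV c
    have hrec := X_zero_mul_Psi c
    simp only [Psi, psiPrev_succ, map_sub, Derivation.leibniz, smul_eq_mul, hT, hUV, ih₁, ih₀]
    push_cast
    linear_combination (↑c + 1) * W * hrec

/-- Used with `(Y, Z) = (U, V)` for `δ'` and with `(Y, Z) = (V, U)` for `δ̂'`. -/
theorem derivation_pow_mul_pow_mul_Psi {Y Z : MvPolynomial (Fin 3) ℂ} (hYZ : Y * Z = X 1 * X 2)
    (hY : D Y = 0) (hZ : D Z = X 0) (hT : D (X 0) = 2 * Y) (a b c : ℕ) :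
    D (Y ^ a * Z ^ b * Psi c) =
      b * (Y ^ a * Z ^ (b - 1) * Psi (c + 1)) +
        (b + c + 1) * (Y ^ (a + 1) * Z ^ b * psiPrev c) := by
  have hΨ := derivation_Psi D (W := Y) hT
    (by rw [← hYZ, Derivation.leibniz, hY, hZ, smul_eq_mul, smul_eq_mul, mul_zero, add_zero,
      mul_comm]) c
  have hZb : (b : MvPolynomial (Fin 3) ℂ) * Z ^ (b - 1) * Z = b * Z ^ b := by
    cases b <;> simp [pow_succ, mul_assoc]
  have hrec := X_zero_mul_Psi c
  simp only [Derivation.leibniz, Derivation.leibniz_pow, hY, hZ, hΨ, smul_eq_mul, nsmul_eq_mul,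
    smul_zero, mul_zero, add_zero]
  rw [← hYZ] at hrec
  linear_combination
    (b : MvPolynomial (Fin 3) ℂ) * Y ^ a * Z ^ (b - 1) * hrec + Y ^ (a + 1) * psiPrev c * hZb

end Derivation

def psiMonomials (n : ℕ) : Set (MvPolynomial (Fin 3) ℂ) :=
  {p | ∃ a b c, a + b + c = n ∧ p = X 1 ^ a * X 2 ^ b * Psi c}

theorem mul_psiPrev_mem_span_psiMonomials {a b c n : ℕ} (h : a + b + c = n + 1) :
    X 1 ^ a * X 2 ^ b * psiPrev c ∈ Submodule.span ℂ (psiMonomials n) := by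
  cases c with
  | zero => simp only [psiPrev, mul_zero, zero_mem]
  | succ c => exact Submodule.subset_span ⟨a, b, c, by omega, rfl⟩

theorem X_zero_mul_mem_span_psiMonomials {n : ℕ} {p : MvPolynomial (Fin 3) ℂ}
    (hp : p ∈ Submodule.span ℂ (psiMonomials n)) :
    X 0 * p ∈ Submodule.span ℂ (psiMonomials (n + 1)) := by
  have : psiMonomials n ⊆ (Submodule.span ℂ (psiMonomials (n + 1))).comap
      (LinearMap.mulLeft ℂ (X 0)) := by
    rintro _ ⟨a, b, c, rfl, rfl⟩
    have h : X 0 * (X 1 ^ a * X 2 ^ b * Psi c) =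
        X 1 ^ a * X 2 ^ b * Psi (c + 1) + X 1 ^ (a + 1) * X 2 ^ (b + 1) * psiPrev c := by
      linear_combination X 1 ^ a * X 2 ^ b * X_zero_mul_Psi c
    rw [SetLike.mem_coe, Submodule.mem_comap, LinearMap.mulLeft_apply, h]
    exact add_mem (Submodule.subset_span ⟨a, b, c + 1, by omega, rfl⟩)
      (mul_psiPrev_mem_span_psiMonomials (by omega))
  exact Submodule.span_le.mpr this hp

theorem X_pow_mul_mem_span_psiMonomials (a b k : ℕ) :
    X 0 ^ k * (X 1 ^ a * X 2 ^ b) ∈ Submodule.span ℂ (psiMonomials (a + b + k)) := by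
  induction k with
  | zero => exact Submodule.subset_span ⟨a, b, 0, rfl, by simp [Psi]⟩
  | succ k ih =>
    rw [pow_succ', mul_assoc, ← add_assoc]
    exact X_zero_mul_mem_span_psiMonomials ih

theorem span_psiMonomials (n : ℕ) :
    Submodule.span ℂ (psiMonomials n) = homogeneousSubmodule (Fin 3) ℂ n := by
  apply le_antisymm
  · rw [Submodule.span_le]
    rintro _ ⟨a, b, c, rfl, rfl⟩
    exact ((isHomogeneous_X_pow _ _).mul (isHomogeneous_X_pow _ _)).mul (isHomogeneous_Psi c)
  · rw [homogeneousSubmodule_eq_span_monomial, Submodule.span_le]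
    rintro _ ⟨m, hm, rfl⟩
    have hdeg : m 1 + m 2 + m 0 = n := by
      rw [← hm, Finsupp.degree_eq_sum, Fin.sum_univ_three]; ring
    have hmon : monomial m (1 : ℂ) = X 0 ^ m 0 * (X 1 ^ m 1 * X 2 ^ m 2) := by
      rw [monomial_eq, C_1, one_mul, Finsupp.prod_fintype _ _ (by simp), Fin.prod_univ_three]
      ring
    rw [SetLike.mem_coe]
    dsimp only
    rw [hmon, ← hdeg]
    exact X_pow_mul_mem_span_psiMonomials _ _ _

theorem deltaD_eq_mkDerivation (d : ℕ) :
    deltaD d = mkDerivation ℂ fun k : Fin (d + 1) => C ((k : ℕ) : ℂ) * Av d ((k : ℕ) - 1) :=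
  funext (sum_mul_pderiv_eq_mkDerivation _)

theorem deltaHatD_eq_mkDerivation (d : ℕ) :
    deltaHatD d = mkDerivation ℂ fun k : Fin (d + 1) => C ((d - k : ℕ) : ℂ) * Av d ((k : ℕ) + 1) :=
  funext (sum_mul_pderiv_eq_mkDerivation _)

theorem deltaD'_eq_mkDerivation : deltaD' = mkDerivation ℂ ![2 * X 1, 0, X 0] := by
  funext p
  simp [← sum_mul_pderiv_eq_mkDerivation, Fin.sum_univ_three, deltaD']

theorem deltaHatD'_eq_mkDerivation : deltaHatD' = mkDerivation ℂ ![2 * X 2, X 0, 0] := by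
  funext p
  simp [← sum_mul_pderiv_eq_mkDerivation, Fin.sum_univ_three, deltaHatD']

theorem Av_of_le {d k : ℕ} (hk : k ≤ d) : Av d k = X ⟨k, Nat.lt_succ_of_le hk⟩ :=
  dif_pos _

theorem deltaD_Av {d k : ℕ} (hk : k ≤ d) : deltaD d (Av d k) = k * Av d (k - 1) := by
  rw [deltaD_eq_mkDerivation, Av_of_le hk, mkDerivation_X, map_natCast]

theorem deltaHatD_Av (d k : ℕ) : deltaHatD d (Av d k) = (d - k : ℕ) * Av d (k + 1) := by
  rcases le_or_gt k d with hk | hk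
  · rw [deltaHatD_eq_mkDerivation, Av_of_le hk, mkDerivation_X, map_natCast]
  · rw [Av, Av, dif_neg (by omega), dif_neg (by omega), mul_zero, deltaHatD_eq_mkDerivation,
      map_zero]

theorem Brel_succ_self (d i : ℕ) : Brel d (i + 1) i = 0 := by
  rw [Brel, Nat.add_sub_cancel, mul_comm, sub_self]

section Generators

variable {a b c : ℕ}

theorem deltaD_Brel :
    deltaD (a + b + c + 2) (Brel (a + b + c + 2) (b + 1) (b + c + 1)) =
      b * Brel (a + b + c + 2) b (b + c + 1) +
        (b + c + 1) * Brel (a + b + c + 2) (b + 1) (b + c) := by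
  have hD := deltaD_eq_mkDerivation (a + b + c + 2)
  simp only [Brel, Nat.add_sub_cancel]
  rw [hD, map_sub, Derivation.leibniz, Derivation.leibniz, ← hD,
    deltaD_Av (by omega), deltaD_Av (by omega), deltaD_Av (by omega), deltaD_Av (by omega)]
  simp only [smul_eq_mul, Nat.add_sub_cancel, show b + c + 1 + 1 - 1 = b + c + 1 by omega]
  push_cast
  ring

theorem deltaHatD_Brel :
    deltaHatD (a + b + c + 2) (Brel (a + b + c + 2) (b + 1) (b + c + 1)) =
      a * Brel (a + b + c + 2) (b + 1) (b + c + 2) +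
        (a + c + 1) * Brel (a + b + c + 2) (b + 2) (b + c + 1) := by
  have hD := deltaHatD_eq_mkDerivation (a + b + c + 2)
  simp only [Brel, Nat.add_sub_cancel]
  rw [hD, map_sub, Derivation.leibniz, Derivation.leibniz, ← hD,
    deltaHatD_Av, deltaHatD_Av, deltaHatD_Av, deltaHatD_Av,
    show a + b + c + 2 - b = a + c + 2 by omega, show a + b + c + 2 - (b + c + 1 + 1) = a by omega,
    show a + b + c + 2 - (b + 1) = a + c + 1 by omega,
    show a + b + c + 2 - (b + c + 1) = a + 1 by omega]
  simp only [smul_eq_mul, show b + 2 - 1 = b + 1 by omega]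
  push_cast
  ring

end Generators

theorem Brel_mem_K2 {d i j : ℕ} (h1 : 1 ≤ i) (h2 : i ≤ j) (h3 : j ≤ d - 1) : Brel d i j ∈ K2 d :=
  Submodule.subset_span ⟨⟨(i, j), h1, h2, h3⟩, rfl⟩

theorem exists_injective_Brel_index_exponents (d : ℕ) :
    ∃ f : {p : ℕ × ℕ // 1 ≤ p.1 ∧ p.1 ≤ p.2 ∧ p.2 ≤ d - 1} →
      {m : Fin 3 →₀ ℕ // m.degree = d - 2}, Function.Injective f := by
  refine ⟨fun p => ⟨Finsupp.equivFunOnFinite.symm ![p.1.2 - p.1.1, d - 1 - p.1.2, p.1.1 - 1], ?_⟩,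
    ?_⟩
  · obtain ⟨⟨i, j⟩, h1, h2, h3⟩ := p
    simp only [Finsupp.degree_eq_sum, Fin.sum_univ_three, Finsupp.equivFunOnFinite_symm_apply_apply,
      Matrix.cons_val_zero, Matrix.cons_val_one, Matrix.cons_val]
    omega
  · rintro ⟨⟨i, j⟩, h1, h2, h3⟩ ⟨⟨i', j'⟩, h1', h2', h3'⟩ h
    have h0 := congrArg (fun m => m.1 0) h
    have h2 := congrArg (fun m => m.1 2) h
    simp only [Finsupp.equivFunOnFinite_symm_apply_apply, Matrix.cons_val_zero, Matrix.cons_val]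
      at h0 h2
    simp only [Subtype.mk.injEq, Prod.mk.injEq]
    omega

section Rho

variable {d : ℕ} (ρ : K2 d →ₗ[ℂ] MvPolynomial (Fin 3) ℂ)
  (hρ : ∀ (i j : ℕ) (h1 : 1 ≤ i) (h2 : i ≤ j) (h3 : j ≤ d - 1),
    ρ ⟨Brel d i j, Submodule.subset_span ⟨⟨(i, j), ⟨h1, h2, h3⟩⟩, rfl⟩⟩ =
      X 1 ^ (d - j - 1) * X 2 ^ (i - 1) * Psi (j - i))
include hρ

theorem rho_Brel {i j a b c : ℕ} (hi : i = b + 1) (hj : j = b + c + 1) (hd : a + b + c + 2 = d)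
    (hx : Brel d i j ∈ K2 d) : ρ ⟨Brel d i j, hx⟩ = X 1 ^ a * X 2 ^ b * Psi c := by
  subst hi hj
  have h := hρ (b + 1) (b + c + 1) (by omega) (by omega) (by omega)
  rwa [show d - (b + c + 1) - 1 = a by omega, Nat.add_sub_cancel,
    show b + c + 1 - (b + 1) = c by omega] at h

theorem mem_graph_Brel {i j a b c : ℕ} (hi : i = b + 1) (hj : j = b + c + 1)
    (hd : a + b + c + 2 = d) :
    (Brel d i j, X 1 ^ a * X 2 ^ b * Psi c) ∈ (LinearPMap.mk (K2 d) ρ).graph :=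
  (LinearPMap.mem_graph_iff _).2
    ⟨⟨Brel d i j, Brel_mem_K2 (by omega) (by omega) (by omega)⟩, rfl, rho_Brel ρ hρ hi hj hd _⟩

theorem mem_graph_Brel_psiPrev {i j a b c : ℕ} (hi : i = b + 1) (hj : j = b + c)
    (hd : a + b + c + 1 = d) :
    (Brel d i j, X 1 ^ a * X 2 ^ b * psiPrev c) ∈ (LinearPMap.mk (K2 d) ρ).graph := by
  subst hi hj
  cases c with
  | zero => simp [Brel_succ_self, psiPrev]
  | succ c => exact mem_graph_Brel ρ hρ rfl rfl (by omega)

theorem mem_graph_deltaD_Brel {a b c : ℕ} (hd : a + b + c + 2 = d) :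
    (deltaD d (Brel d (b + 1) (b + c + 1)), deltaD' (X 1 ^ a * X 2 ^ b * Psi c)) ∈
      (LinearPMap.mk (K2 d) ρ).graph := by
  subst hd
  rw [deltaD_Brel, deltaD'_eq_mkDerivation,
    derivation_pow_mul_pow_mul_Psi _ rfl (by simp) (by simp) (by simp) a b c]
  have hlower : b • (Brel (a + b + c + 2) b (b + c + 1), X 1 ^ a * X 2 ^ (b - 1) * Psi (c + 1)) ∈
      (LinearPMap.mk (K2 (a + b + c + 2)) ρ).graph :=
    nsmul_mem_of_ne_zero b fun hb => mem_graph_Brel ρ hρ (by omega) (by omega) (by omega)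
  have hraise := mem_graph_Brel_psiPrev ρ hρ (a := a + 1) (b := b) (c := c) rfl rfl (by omega)
  convert add_mem hlower (nsmul_mem hraise (b + c + 1)) using 1
  simp only [Prod.smul_mk, Prod.mk_add_mk, nsmul_eq_mul, Prod.mk.injEq]
  push_cast
  constructor <;> ring

theorem mem_graph_deltaHatD_Brel {a b c : ℕ} (hd : a + b + c + 2 = d) :
    (deltaHatD d (Brel d (b + 1) (b + c + 1)), deltaHatD' (X 1 ^ a * X 2 ^ b * Psi c)) ∈
      (LinearPMap.mk (K2 d) ρ).graph := by
  subst hd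
  rw [deltaHatD_Brel, deltaHatD'_eq_mkDerivation, mul_comm (X 1 ^ a),
    derivation_pow_mul_pow_mul_Psi _ (mul_comm _ _) (by simp) (by simp) (by simp) b a c]
  have hlower :
      a • (Brel (a + b + c + 2) (b + 1) (b + c + 2), X 1 ^ (a - 1) * X 2 ^ b * Psi (c + 1)) ∈
      (LinearPMap.mk (K2 (a + b + c + 2)) ρ).graph :=
    nsmul_mem_of_ne_zero a fun ha => mem_graph_Brel ρ hρ rfl (by omega) (by omega)
  have hraise := mem_graph_Brel_psiPrev ρ hρ (j := b + c + 1) (a := a) (b := b + 1) (c := c)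
    rfl (by omega) (by omega)
  convert add_mem hlower (nsmul_mem hraise (a + c + 1)) using 1
  simp only [Prod.smul_mk, Prod.mk_add_mk, nsmul_eq_mul, Prod.mk.injEq]
  push_cast
  constructor <;> ring

theorem prodMap_mem_graph_of_Brel
    (D : MvPolynomial (Fin (d + 1)) ℂ →ₗ[ℂ] MvPolynomial (Fin (d + 1)) ℂ)
    (D' : MvPolynomial (Fin 3) ℂ →ₗ[ℂ] MvPolynomial (Fin 3) ℂ)
    (hgen : ∀ a b c, a + b + c + 2 = d →
      (D (Brel d (b + 1) (b + c + 1)), D' (X 1 ^ a * X 2 ^ b * Psi c)) ∈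
        (LinearPMap.mk (K2 d) ρ).graph)
    (z : K2 d) : (D z, D' (ρ z)) ∈ (LinearPMap.mk (K2 d) ρ).graph := by
  refine LinearPMap.prodMap_mem_graph_of_span ρ D D' ?_ z
  rintro _ ⟨⟨⟨i, j⟩, h1, h2, h3⟩, rfl⟩
  obtain ⟨b, rfl⟩ : ∃ b, i = b + 1 := ⟨i - 1, by omega⟩
  obtain ⟨c, rfl⟩ : ∃ c, j = b + c + 1 := ⟨j - b - 1, by omega⟩
  have hd : d - (b + c + 1) - 1 + b + c + 2 = d := by dsimp only at h3; omega
  have h := hgen _ _ _ hd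
  rwa [← rho_Brel ρ hρ rfl rfl hd (Brel_mem_K2 h1 h2 h3)] at h

theorem mem_graph_deltaD (z : K2 d) :
    (deltaD d z, deltaD' (ρ z)) ∈ (LinearPMap.mk (K2 d) ρ).graph := by
  rw [deltaD_eq_mkDerivation, deltaD'_eq_mkDerivation]
  refine prodMap_mem_graph_of_Brel ρ hρ (Derivation.toLinearMap _) (Derivation.toLinearMap _) ?_ z
  intro a b c hd
  have := mem_graph_deltaD_Brel ρ hρ hd
  rwa [deltaD_eq_mkDerivation, deltaD'_eq_mkDerivation] at this

theorem mem_graph_deltaHatD (z : K2 d) :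
    (deltaHatD d z, deltaHatD' (ρ z)) ∈ (LinearPMap.mk (K2 d) ρ).graph := by
  rw [deltaHatD_eq_mkDerivation, deltaHatD'_eq_mkDerivation]
  refine prodMap_mem_graph_of_Brel ρ hρ (Derivation.toLinearMap _) (Derivation.toLinearMap _) ?_ z
  intro a b c hd
  have := mem_graph_deltaHatD_Brel ρ hρ hd
  rwa [deltaHatD_eq_mkDerivation, deltaHatD'_eq_mkDerivation] at this


theorem range_rho (hd : 2 ≤ d) : LinearMap.range ρ = homogeneousSubmodule (Fin 3) ℂ (d - 2) := by
  have htop : Submodule.span ℂ (((↑) : K2 d → _) ⁻¹' Set.range (Bfam d)) = ⊤ :=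
    Submodule.span_span_coe_preimage
  rw [LinearMap.range_eq_map, ← htop, Submodule.map_span, ← span_psiMonomials]
  congr 1
  ext p
  constructor
  · rintro ⟨⟨x, hx⟩, ⟨⟨⟨i, j⟩, h1, h2, h3⟩, hij⟩, rfl⟩
    obtain rfl : x = Brel d i j := hij.symm
    exact ⟨d - j - 1, i - 1, j - i, by omega, hρ i j h1 h2 h3⟩
  · rintro ⟨a, b, c, habc, rfl⟩
    exact ⟨⟨Brel d (b + 1) (b + c + 1), Brel_mem_K2 (by omega) (by omega) (by omega)⟩,
      ⟨⟨(b + 1, b + c + 1), by omega, by omega, by omega⟩, rfl⟩,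
      rho_Brel ρ hρ rfl rfl (by omega) _⟩

theorem injective_rho (hd : 2 ≤ d) : Function.Injective ρ := by
  obtain ⟨f, hf⟩ := exists_injective_Brel_index_exponents d
  have : Finite {m : Fin 3 →₀ ℕ // m.degree = d - 2} :=
    (Finsupp.finite_of_degree_eq (d - 2)).to_subtype
  have := Finite.of_injective f hf
  have := Fintype.ofFinite {p : ℕ × ℕ // 1 ≤ p.1 ∧ p.1 ≤ p.2 ∧ p.2 ≤ d - 1}
  have : FiniteDimensional ℂ (K2 d) := FiniteDimensional.span_of_finite ℂ (Set.finite_range _)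
  apply LinearMap.injective_of_finrank_le_finrank_range
  calc Module.finrank ℂ (K2 d)
      ≤ Fintype.card {p : ℕ × ℕ // 1 ≤ p.1 ∧ p.1 ≤ p.2 ∧ p.2 ≤ d - 1} :=
        finrank_range_le_card (Bfam d)
    _ ≤ Nat.card {m : Fin 3 →₀ ℕ // m.degree = d - 2} := by
        rw [← Nat.card_eq_fintype_card]; exact Nat.card_le_card_of_injective f hf
    _ = Module.finrank ℂ (LinearMap.range ρ) := by
        rw [range_rho ρ hρ hd, finrank_homogeneousSubmodule]

end Rho

/-- (a) `δ` and `δ̂` map `K₂` into `K₂`; (b) the linear map `ρ : K₂ → ℂ[T,U,V]`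
with `ρ(B_{i,j}) = U^{d−j−1}·V^{i−1}·Ψ_{j−i}(T,U,V)` is an isomorphism of `K₂` onto the
degree-`(d−2)` homogeneous component of `ℂ[T,U,V]`; (c) `ρ∘δ = δ'∘ρ` and `ρ∘δ̂ = δ̂'∘ρ`
on `K₂`. -/
theorem stmt13 (d : ℕ) (hd : 2 ≤ d)
    (ρ : ↥(K2 d) →ₗ[ℂ] MvPolynomial (Fin 3) ℂ)
    (hρ : ∀ (i j : ℕ) (h1 : 1 ≤ i) (h2 : i ≤ j) (h3 : j ≤ d - 1),
      ρ ⟨Brel d i j, Submodule.subset_span ⟨⟨(i, j), ⟨h1, h2, h3⟩⟩, rfl⟩⟩ =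
        X 1 ^ (d - j - 1) * X 2 ^ (i - 1) * Psi (j - i)) :
    (∀ z ∈ K2 d, deltaD d z ∈ K2 d) ∧
    (∀ z ∈ K2 d, deltaHatD d z ∈ K2 d) ∧
    (Function.Injective ρ ∧
      LinearMap.range ρ = homogeneousSubmodule (Fin 3) ℂ (d - 2)) ∧
    (∀ (z : MvPolynomial (Fin (d + 1)) ℂ) (hz : z ∈ K2 d) (hz' : deltaD d z ∈ K2 d),
      ρ ⟨deltaD d z, hz'⟩ = deltaD' (ρ ⟨z, hz⟩)) ∧
    (∀ (z : MvPolynomial (Fin (d + 1)) ℂ) (hz : z ∈ K2 d) (hz' : deltaHatD d z ∈ K2 d),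
      ρ ⟨deltaHatD d z, hz'⟩ = deltaHatD' (ρ ⟨z, hz⟩)) :=
  ⟨fun z hz => LinearPMap.mem_domain_of_mem_graph (mem_graph_deltaD ρ hρ ⟨z, hz⟩),
    fun z hz => LinearPMap.mem_domain_of_mem_graph (mem_graph_deltaHatD ρ hρ ⟨z, hz⟩),
    ⟨injective_rho ρ hρ hd, range_rho ρ hρ hd⟩,
    fun z hz hz' => ((LinearPMap.image_iff hz').2 (mem_graph_deltaD ρ hρ ⟨z, hz⟩)).symm,
    fun z hz hz' => ((LinearPMap.image_iff hz').2 (mem_graph_deltaHatD ρ hρ ⟨z, hz⟩)).symm⟩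
end

section
/- Fix an integer d ≥ 3 and a ∈ ℂ. Then the set of triples (𝔮,𝔔,𝔢) ∈ ℂ³ satisfying, for all 1 ≤ i ≤ j ≤ d−1, the equation (𝔢² − 4·𝔮·𝔔 − d²·a²)·𝔮^{d−j−1}·𝔔^{i−1}·Ψ_{j−i}(𝔢,𝔮,𝔔) = 0 is equal to {(0,0,0)} ∪ {(𝔮,𝔔,𝔢) ∈ ℂ³ : 𝔢² − 4·𝔮·𝔔 = d²·a²}. -/
open MvPolynomial

lemma psi_eval (e : ℂ) : ∀ k, MvPolynomial.eval ![e, 0, 0] (Psi k) = e ^ k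
  | 0 => by simp [Psi]
  | 1 => by simp [Psi]
  | (n + 2) => by
      simp only [Psi, map_sub, map_mul, eval_X, psi_eval e (n + 1), psi_eval e n]
      simp [pow_succ]
      ring

/-- for `d ≥ 3` and `a ∈ ℂ`, the set of `(𝔮,𝔔,𝔢) ∈ ℂ³` satisfying
`(𝔢² − 4𝔮𝔔 − d²a²)·𝔮^{d−j−1}·𝔔^{i−1}·Ψ_{j−i}(𝔢,𝔮,𝔔) = 0` for all `1 ≤ i ≤ j ≤ d−1`
is `{(0,0,0)} ∪ {(𝔮,𝔔,𝔢) : 𝔢² − 4𝔮𝔔 = d²a²}`. -/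
theorem stmt15 (d : ℕ) (hd : 3 ≤ d) (a : ℂ) :
    {p : ℂ × ℂ × ℂ | ∀ i j : ℕ, 1 ≤ i → i ≤ j → j ≤ d - 1 →
        (p.2.2 ^ 2 - 4 * p.1 * p.2.1 - (d : ℂ) ^ 2 * a ^ 2) * p.1 ^ (d - j - 1) *
            p.2.1 ^ (i - 1) *
            MvPolynomial.eval ![p.2.2, p.1, p.2.1] (Psi (j - i)) = 0} =
      {((0 : ℂ), (0 : ℂ), (0 : ℂ))} ∪
        {p : ℂ × ℂ × ℂ | p.2.2 ^ 2 - 4 * p.1 * p.2.1 = (d : ℂ) ^ 2 * a ^ 2} := by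
  ext ⟨q, Q, e⟩
  simp only [Set.mem_setOf_eq, Set.mem_union, Set.mem_singleton_iff, Prod.mk.injEq]
  constructor
  · intro h
    by_cases hA : e ^ 2 - 4 * q * Q = (d : ℂ) ^ 2 * a ^ 2
    · exact Or.inr hA
    · left
      have hA' : e ^ 2 - 4 * q * Q - (d : ℂ) ^ 2 * a ^ 2 ≠ 0 := sub_ne_zero.mpr hA
      have hq : q = 0 := by
        have h1 := h 1 1 le_rfl le_rfl (by omega)
        simp only [Nat.sub_self, pow_zero, mul_one, Psi] at h1
        simp only [map_one, mul_one] at h1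
        have := (mul_eq_zero.mp h1).resolve_left hA'
        exact pow_eq_zero_iff (by omega : d - 1 - 1 ≠ 0) |>.mp this
      have hQ : Q = 0 := by
        have h2 := h (d - 1) (d - 1) (by omega) le_rfl le_rfl
        simp only [Nat.sub_self, pow_zero, mul_one, Psi] at h2
        simp only [map_one, mul_one] at h2
        rw [show d - (d - 1) - 1 = 0 by omega, pow_zero, mul_one] at h2
        have := (mul_eq_zero.mp h2).resolve_left hA'
        exact pow_eq_zero_iff (by omega : d - 1 - 1 ≠ 0) |>.mp this
      have he : e = 0 := by
        have h3 := h 1 (d - 1) le_rfl (by omega) le_rfl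
        rw [hq, hQ, psi_eval] at h3
        rw [hq, hQ] at hA'
        rw [show d - (d - 1) - 1 = 0 by omega, Nat.sub_self] at h3
        simp only [pow_zero, mul_one, one_pow] at h3
        have := (mul_eq_zero.mp h3).resolve_left hA'
        exact pow_eq_zero_iff (by omega : d - 1 - 1 ≠ 0) |>.mp this
      exact ⟨hq, hQ, he⟩
  · rintro (⟨rfl, rfl, rfl⟩ | hA) <;> intro i j hi hij hj
    · rw [psi_eval]
      have hx : 1 ≤ d - j - 1 ∨ 1 ≤ i - 1 ∨ 1 ≤ j - i := by omega
      rcases hx with hx | hx | hx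
      · rw [zero_pow (by omega : d - j - 1 ≠ 0)]; ring
      · rw [zero_pow (by omega : i - 1 ≠ 0)]; ring
      · rw [zero_pow (by omega : j - i ≠ 0)]; ring
    · rw [hA, sub_self, zero_mul, zero_mul, zero_mul]
end
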